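/- arXiv:2401.07916 — 2 statements merged into one kernel-verified Lean document; each statement's English description precedes it below -/
import Mathlib

section
/- The Bergman fan of a loopless matroid M of rank r+1 is balanced with unit weights: for every flag F of proper flats of M omitting exactly one rank i (with 0 < i < r+1), the sum Σ_F e_{F − F_{i−1}} over all rank-i flats F with F_{i−1} ⊊ F ⊊ F_{i+1} equals e_{F_{i+1} − F_{i−1}} in ℝ^E/ℝe_E, which lies in the span of the rays of the flag. -/
open scoped Classical
open Finset Polynomial

/-- A matroid on the finite ground type `E`, given by its rank function. -/
structure FinRankMatroid (E : Type*) [Fintype E] [DecidableEq E] where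
  r : Finset E → ℕ
  r_le_card : ∀ A : Finset E, r A ≤ A.card
  mono : ∀ ⦃A B : Finset E⦄, A ⊆ B → r A ≤ r B
  submod : ∀ A B : Finset E, r (A ∪ B) + r (A ∩ B) ≤ r A + r B

variable {E : Type*} [Fintype E] [DecidableEq E]

/-- The (Whitney-form) characteristic polynomial of the rank function `rk`
with ground set `G`:  `χ(q) = Σ_{A ⊆ G} (-1)^{|A|} q^{rk(G) - rk(A)}`. -/
noncomputable def charPoly (rk : Finset E → ℕ) (G : Finset E) : Polynomial ℤ :=
  ∑ A ∈ G.powerset, (-1 : Polynomial ℤ) ^ A.card * X ^ (rk G - rk A)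

/-- `F` is a flat of the rank function `rk`: adding any new element raises the rank. -/
def IsFlat (rk : Finset E → ℕ) (F : Finset E) : Prop :=
  ∀ e ∉ F, rk F < rk (insert e F)

/-- The indicator vector `e_S ∈ ℝ^E` of a subset `S ⊆ E`. -/
noncomputable def eVec (S : Finset E) : E → ℝ := fun x => if x ∈ S then 1 else 0
/-
For `x ∈ B \ A` the closure of `A ∪ {x}` is a flat strictly between `A` and `B` (its rank is
`r(A) + 1`), and it is the only such flat containing `x`: any flat `F` with `A ⊂ F ⊂ B` has
rank `r(A) + 1 = r(A ∪ {x})`, so it equals the closure of `A ∪ {x}` as soon as it contains `x`.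
Hence the sets `F \ A` partition `B \ A`, and their indicator vectors sum to `e_{B − A}`.
-/

omit [Fintype E] in
theorem eVec_eq_indicator (S : Finset E) : eVec S = Set.indicator (S : Set E) 1 := by
  funext x
  simp [eVec, Set.indicator]

omit [Fintype E] in
theorem eVec_sdiff {A B : Finset E} (h : A ⊆ B) : eVec (B \ A) = eVec B - eVec A := by
  simpa only [eVec_eq_indicator, coe_sdiff] using Set.indicator_sdiff (coe_subset.mpr h) 1

omit [Fintype E] in
theorem sum_eVec_of_pairwiseDisjoint {ι : Type*} (s : Finset ι) (f : ι → Finset E)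
    (h : (s : Set ι).PairwiseDisjoint f) : ∑ i ∈ s, eVec (f i) = eVec (s.biUnion f) := by
  funext x
  have hdisj : (s : Set ι).PairwiseDisjoint fun i => (f i : Set E) :=
    fun i hi j hj hij => disjoint_coe.mpr (h hi hj hij)
  simp only [Finset.sum_apply, eVec_eq_indicator, coe_biUnion, mem_coe,
    Finset.indicator_biUnion_apply s _ hdisj]

namespace FinRankMatroid

variable (M : FinRankMatroid E)

theorem rank_insert_le (S : Finset E) (e : E) : M.r (insert e S) ≤ M.r S + 1 := by
  have hsub := M.submod S {e}
  have hsingle : M.r {e} ≤ 1 := by simpa using M.r_le_card {e}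
  rw [union_comm, ← insert_eq] at hsub
  omega

theorem rank_union_eq_of_forall_rank_insert_eq (S T : Finset E)
    (h : ∀ e ∈ T, M.r (insert e S) = M.r S) : M.r (S ∪ T) = M.r S := by
  induction T using Finset.induction_on with
  | empty => simp
  | @insert e T _ ih =>
    have hT : M.r (S ∪ T) = M.r S := ih fun y hy => h y (mem_insert_of_mem hy)
    have he : M.r (insert e S) = M.r S := h e (mem_insert_self _ _)
    have hsub := M.submod (insert e S) (S ∪ T)
    have hunion : insert e S ∪ (S ∪ T) = S ∪ insert e T := by
      ext; simp only [mem_union, mem_insert]; tauto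
    rw [hunion] at hsub
    have hinter := M.mono (show S ⊆ insert e S ∩ (S ∪ T) from
      subset_inter (subset_insert _ _) subset_union_left)
    have hmono := M.mono (show S ⊆ S ∪ insert e T from subset_union_left)
    omega

noncomputable def closure (S : Finset E) : Finset E :=
  univ.filter fun e => M.r (insert e S) = M.r S

variable {M} in
theorem mem_closure {S : Finset E} {e : E} : e ∈ M.closure S ↔ M.r (insert e S) = M.r S := by
  simp [closure]

theorem subset_closure (S : Finset E) : S ⊆ M.closure S := fun e he =>
  mem_closure.mpr (by rw [insert_eq_of_mem he])

theorem rank_closure (S : Finset E) : M.r (M.closure S) = M.r S := by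
  rw [← union_eq_right.mpr (M.subset_closure S)]
  exact M.rank_union_eq_of_forall_rank_insert_eq S _ fun e => mem_closure.mp

theorem isFlat_closure (S : Finset E) : IsFlat M.r (M.closure S) := by
  intro e he
  have hlt : M.r S < M.r (insert e S) :=
    (M.mono (subset_insert e S)).lt_of_ne fun h => he (mem_closure.mpr h.symm)
  have hmono := M.mono (insert_subset_insert e (M.subset_closure S))
  rw [M.rank_closure]
  omega

end FinRankMatroid

open FinRankMatroid

variable {M : FinRankMatroid E}

theorem IsFlat.closure_subset {S F : Finset E} (hF : IsFlat M.r F) (hSF : S ⊆ F) :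
    M.closure S ⊆ F := by
  intro e he
  by_contra heF
  have hlt := hF e heF
  have hsub := M.submod (insert e S) F
  rw [insert_union, union_eq_right.mpr hSF] at hsub
  have hinter := M.mono (show S ⊆ insert e S ∩ F from subset_inter (subset_insert _ _) hSF)
  have := mem_closure.mp he
  omega

theorem IsFlat.eq_closure_of_rank_eq {S F : Finset E} (hF : IsFlat M.r F) (hSF : S ⊆ F)
    (h : M.r F = M.r S) : F = M.closure S := by
  refine Subset.antisymm (fun y hy => mem_closure.mpr ?_) (hF.closure_subset hSF)
  have h₁ := M.mono (insert_subset hy hSF)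
  have h₂ := M.mono (subset_insert y S)
  omega

theorem IsFlat.rank_lt_of_ssubset {A F : Finset E} (hA : IsFlat M.r A) (h : A ⊂ F) :
    M.r A < M.r F := by
  obtain ⟨y, hyF, hyA⟩ := exists_of_ssubset h
  exact (hA y hyA).trans_le (M.mono (insert_subset hyF h.subset))

theorem IsFlat.rank_insert_of_notMem {A : Finset E} {x : E} (hA : IsFlat M.r A) (hx : x ∉ A) :
    M.r (insert x A) = M.r A + 1 :=
  le_antisymm (M.rank_insert_le A x) (hA x hx)

namespace FinRankMatroid

variable (M) in
noncomputable def flatsBetween (A B : Finset E) : Finset (Finset E) :=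
  univ.filter fun F => IsFlat M.r F ∧ A ⊂ F ∧ F ⊂ B

variable {A B : Finset E}

theorem rank_eq_of_mem_flatsBetween (hA : IsFlat M.r A) (hr2 : M.r B = M.r A + 2)
    {F : Finset E} (hF : F ∈ M.flatsBetween A B) : M.r F = M.r A + 1 := by
  obtain ⟨hFflat, hAF, hFB⟩ := (mem_filter.mp hF).2
  have h₁ := hA.rank_lt_of_ssubset hAF
  have h₂ := hFflat.rank_lt_of_ssubset hFB
  omega

theorem eq_closure_insert_of_mem_flatsBetween (hA : IsFlat M.r A)
    (hr2 : M.r B = M.r A + 2) {F : Finset E} (hF : F ∈ M.flatsBetween A B)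
    {x : E} (hxF : x ∈ F) (hxA : x ∉ A) : F = M.closure (insert x A) := by
  obtain ⟨hFflat, hAF, -⟩ := (mem_filter.mp hF).2
  refine hFflat.eq_closure_of_rank_eq (insert_subset hxF hAF.subset) ?_
  rw [rank_eq_of_mem_flatsBetween hA hr2 hF, hA.rank_insert_of_notMem hxA]

theorem closure_insert_mem_flatsBetween (hA : IsFlat M.r A) (hB : IsFlat M.r B)
    (hAB : A ⊆ B) (hr2 : M.r B = M.r A + 2) {x : E} (hxB : x ∈ B) (hxA : x ∉ A) :
    M.closure (insert x A) ∈ M.flatsBetween A B := by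
  have hsubB : M.closure (insert x A) ⊆ B := hB.closure_subset (insert_subset hxB hAB)
  refine mem_filter.mpr ⟨mem_univ _, M.isFlat_closure _,
    (ssubset_insert hxA).trans_subset (M.subset_closure _), hsubB.ssubset_of_ne fun h => ?_⟩
  have := M.rank_closure (insert x A)
  rw [h, hA.rank_insert_of_notMem hxA] at this
  omega

theorem pairwiseDisjoint_flatsBetween_sdiff (hA : IsFlat M.r A) (hr2 : M.r B = M.r A + 2) :
    (M.flatsBetween A B : Set (Finset E)).PairwiseDisjoint (· \ A) := by
  intro F hF G hG hFG
  refine disjoint_left.mpr fun x hxF hxG => hFG ?_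
  rw [mem_sdiff] at hxF hxG
  rw [eq_closure_insert_of_mem_flatsBetween hA hr2 hF hxF.1 hxF.2,
    eq_closure_insert_of_mem_flatsBetween hA hr2 hG hxG.1 hxG.2]

theorem biUnion_flatsBetween_sdiff (hA : IsFlat M.r A) (hB : IsFlat M.r B) (hAB : A ⊆ B)
    (hr2 : M.r B = M.r A + 2) : (M.flatsBetween A B).biUnion (· \ A) = B \ A := by
  ext x
  simp only [mem_biUnion, mem_sdiff]
  constructor
  · rintro ⟨F, hF, hxF, hxA⟩
    exact ⟨(mem_filter.mp hF).2.2.2.subset hxF, hxA⟩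
  · rintro ⟨hxB, hxA⟩
    exact ⟨_, closure_insert_mem_flatsBetween hA hB hAB hr2 hxB hxA,
      M.subset_closure _ (mem_insert_self x A), hxA⟩

theorem sum_eVec_sdiff_flatsBetween (hA : IsFlat M.r A) (hB : IsFlat M.r B) (hAB : A ⊆ B)
    (hr2 : M.r B = M.r A + 2) :
    ∑ F ∈ M.flatsBetween A B, eVec (F \ A) = eVec (B \ A) := by
  rw [sum_eVec_of_pairwiseDisjoint _ _ (pairwiseDisjoint_flatsBetween_sdiff hA hr2),
    biUnion_flatsBetween_sdiff hA hB hAB hr2]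

end FinRankMatroid

theorem bergman_fan_balanced_general (M : FinRankMatroid E)
    (A B : Finset E) (hA : IsFlat M.r A) (hB : IsFlat M.r B)
    (hAB : A ⊂ B) (hr2 : M.r B = M.r A + 2) :
    (∑ F ∈ Finset.univ.powerset.filter (fun F => IsFlat M.r F ∧ A ⊂ F ∧ F ⊂ B),
        eVec (F \ A)) = eVec (B \ A) ∧
      eVec (B \ A) = eVec B - eVec A := by
  rw [powerset_univ]
  exact ⟨sum_eVec_sdiff_flatsBetween hA hB hAB.subset hr2, eVec_sdiff hAB.subset⟩

/-- The Bergman fan of a loopless matroid is balanced with unit weights: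
for flats `A ⊊ B` with `r(B) = r(A) + 2` (the two flats of a flag adjacent to the omitted
rank), the sum `Σ_F e_{F − A}` over the flats `F` with `A ⊊ F ⊊ B` equals
`e_{B − A} = e_B − e_A`, which lies in the span of the rays of the flag. -/
theorem bergman_fan_balanced (M : FinRankMatroid E) (r : ℕ)
    (hrank : M.r Finset.univ = r + 1)
    (hloopless : ∀ e : E, 1 ≤ M.r {e})
    (A B : Finset E) (hA : IsFlat M.r A) (hB : IsFlat M.r B)
    (hAB : A ⊂ B) (hr2 : M.r B = M.r A + 2) :
    (∑ F ∈ Finset.univ.powerset.filter (fun F => IsFlat M.r F ∧ A ⊂ F ∧ F ⊂ B),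
        eVec (F \ A)) = eVec (B \ A) ∧
      eVec (B \ A) = eVec B - eVec A :=
  bergman_fan_balanced_general M A B hA hB hAB hr2
end

section
/- Weisner's theorem: in a finite lattice L with Möbius function μ, for any atom a and for x ranging over elements with x ∨ a = 1̂, one has Σ_{x : x ∨ a = 1̂, x ≠ 1̂} μ(0̂, x) = −μ(0̂, 1̂); equivalently Σ_{x : x ∨ a = 1̂} μ(0̂, x) = 0. -/
open scoped Classical
open Finset

/-! Put `N z = Σ_{x ⊔ a = z} μ(⊥, x)`. Grouping by `x ⊔ a`, the partial sums of `N` are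
`Σ_{z ≤ w} N z = Σ_{x ⊔ a ≤ w} μ(⊥, x)`, which is `0` when `a ≰ w` and the full Möbius sum
`Σ_{x ≤ w} μ(⊥, x) = 0` when `a ≤ w` (then `w ≠ ⊥` as `a ≠ ⊥`). A function on a finite poset
all of whose partial sums vanish is zero, so `N ⊤ = 0`; removing the term `x = ⊤` gives the
first form. -/

theorem eq_zero_of_forall_sum_filter_le_eq_zero {α M : Type*} [PartialOrder α] [Fintype α]
    [AddCommMonoid M] {f : α → M} (hf : ∀ w, ∑ z ∈ univ.filter (· ≤ w), f z = 0) (w : α) :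
    f w = 0 := by
  induction w using WellFoundedLT.induction with
  | ind w ih =>
    have hsplit : univ.filter (· ≤ w) = insert w (univ.filter (· < w)) := by
      ext z
      simp [le_iff_eq_or_lt]
    have hlt : ∑ z ∈ univ.filter (· < w), f z = 0 :=
      sum_eq_zero fun z hz => ih z (mem_filter.mp hz).2
    simpa [hsplit, hlt] using hf w

section Mobius

variable {L M : Type*} [SemilatticeSup L] [OrderBot L] [Fintype L] [AddCommMonoid M]
  {mu : L → M} (hmu : ∀ x ≠ ⊥, ∑ y ∈ univ.filter (· ≤ x), mu y = 0) {a : L}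

include hmu in
theorem sum_filter_sup_le_eq_zero (ha : a ≠ ⊥) (w : L) :
    ∑ x ∈ univ.filter (fun x => x ⊔ a ≤ w), mu x = 0 := by
  by_cases haw : a ≤ w
  · have hw : w ≠ ⊥ := fun h => ha (le_bot_iff.mp (h ▸ haw))
    simpa [sup_le_iff, haw] using hmu w hw
  · have hempty : univ.filter (fun x => x ⊔ a ≤ w) = ∅ :=
      filter_eq_empty_iff.mpr fun x _ h => haw (sup_le_iff.mp h).2
    rw [hempty, sum_empty]

include hmu in
theorem sum_filter_sup_eq_eq_zero (ha : a ≠ ⊥) (z : L) :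
    ∑ x ∈ univ.filter (fun x => x ⊔ a = z), mu x = 0 := by
  refine eq_zero_of_forall_sum_filter_le_eq_zero
    (f := fun z => ∑ x ∈ univ.filter (fun x => x ⊔ a = z), mu x) (fun w => ?_) z
  rw [sum_fiberwise_eq_sum_filter univ _ (· ⊔ a)]
  simpa using sum_filter_sup_le_eq_zero hmu ha w

end Mobius

theorem weisner_general {L : Type*} [Lattice L] [BoundedOrder L] [Fintype L]
    (a : L) (ha : IsAtom a)
    (mu : L → ℤ)
    (hmu : ∀ x : L, (∑ y ∈ Finset.univ.filter (fun y => y ≤ x), mu y) =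
      if x = ⊥ then 1 else 0) :
    (∑ x ∈ Finset.univ.filter (fun x => x ⊔ a = ⊤ ∧ x ≠ ⊤), mu x) = - mu ⊤ ∧
      (∑ x ∈ Finset.univ.filter (fun x => x ⊔ a = ⊤), mu x) = 0 := by
  have hjoin : ∑ x ∈ univ.filter (fun x => x ⊔ a = ⊤), mu x = 0 :=
    sum_filter_sup_eq_eq_zero (fun x hx => by rw [hmu x, if_neg hx]) ha.1 ⊤
  have herase : univ.filter (fun x => x ⊔ a = ⊤ ∧ x ≠ ⊤) =
      (univ.filter (fun x => x ⊔ a = ⊤)).erase ⊤ := by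
    ext x
    simp [and_comm]
  have htop : (⊤ : L) ∈ univ.filter (fun x => x ⊔ a = ⊤) := by simp
  refine ⟨?_, hjoin⟩
  rw [herase]
  rw [← add_sum_erase _ _ htop] at hjoin
  linarith

/-- **Weisner's theorem.** In a finite lattice `L` with `⊥ ≠ ⊤` and Möbius
function `μ(⊥,·)` (characterized by `Σ_{y ≤ x} μ(⊥,y) = [x = ⊥]`), for any atom `a`:
`Σ_{x ⊔ a = ⊤, x ≠ ⊤} μ(⊥,x) = −μ(⊥,⊤)`, equivalently `Σ_{x ⊔ a = ⊤} μ(⊥,x) = 0`. -/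
theorem weisner {L : Type*} [Lattice L] [BoundedOrder L] [Fintype L]
    (hbt : (⊥ : L) ≠ ⊤) (a : L) (ha : IsAtom a)
    (mu : L → ℤ)
    (hmu : ∀ x : L, (∑ y ∈ Finset.univ.filter (fun y => y ≤ x), mu y) =
      if x = ⊥ then 1 else 0) :
    (∑ x ∈ Finset.univ.filter (fun x => x ⊔ a = ⊤ ∧ x ≠ ⊤), mu x) = - mu ⊤ ∧
      (∑ x ∈ Finset.univ.filter (fun x => x ⊔ a = ⊤), mu x) = 0 :=
  weisner_general a ha mu hmu
end
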